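/- arXiv:2602.14864 — 2 statements merged into one kernel-verified Lean document; each statement's English description precedes it below -/
import Mathlib

section
/- Let r ≥ 2 and let SU(2)^r act on ℂ^{2r} via the block-diagonal embedding (A_1, …, A_r) ↦ diag(A_1, …, A_r) into U(2r). For every integer n with 2 ≤ n ≤ 2r−2, the representation of SU(2)^r on the exterior power ⋀^n(ℂ^{2r}) is not multiplicity-free; in particular, for n even the vectors (e_1∧e_2) ∧ ⋯ ∧ (e_{n−3}∧e_{n−2}) ∧ (e_{n−1}∧e_n) and (e_1∧e_2) ∧ ⋯ ∧ (e_{n−3}∧e_{n−2}) ∧ (e_{n+1}∧e_{n+2}) span two distinct copies of the trivial representation of SU(2)^r. -/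
noncomputable section

/-- A representation is irreducible if the space is nontrivial and the only invariant
subspaces are `⊥` and `⊤`. -/
def IsIrred {G V : Type*} [Group G] [AddCommGroup V] [Module ℂ V]
    (ρ : Representation ℂ G V) : Prop :=
  Nontrivial V ∧ ∀ W : Submodule ℂ V, (∀ g : G, ∀ v ∈ W, ρ g v ∈ W) → W = ⊥ ∨ W = ⊤

/-- The space of equivariant (intertwining) linear maps between two representations. -/
def EquivMaps {G V W : Type*} [Group G] [AddCommGroup V] [Module ℂ V] [AddCommGroup W]
    [Module ℂ W] (σ : Representation ℂ G V) (ρ : Representation ℂ G W) :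
    Submodule ℂ (V →ₗ[ℂ] W) where
  carrier := {f | ∀ g : G, f ∘ₗ σ g = ρ g ∘ₗ f}
  add_mem' := fun ha hb g => by rw [LinearMap.add_comp, LinearMap.comp_add, ha g, hb g]
  zero_mem' := fun g => by rw [LinearMap.zero_comp, LinearMap.comp_zero]
  smul_mem' := fun c a ha g => by rw [LinearMap.smul_comp, LinearMap.comp_smul, ha g]

/-- A representation `ρ` of a group `G` is multiplicity-free if every irreducible
finite-dimensional representation `σ` of `G` satisfies `dim Hom_G(σ, ρ) ≤ 1`. -/
def MultFree {G W : Type*} [Group G] [AddCommGroup W] [Module ℂ W]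
    (ρ : Representation ℂ G W) : Prop :=
  ∀ (V : Type) [AddCommGroup V] [Module ℂ V] [FiniteDimensional ℂ V]
    (σ : Representation ℂ G V), IsIrred σ → Module.finrank ℂ (EquivMaps σ ρ) ≤ 1

/-- Equivalence (isomorphism) of two representations. -/
def RepEquiv {G V W : Type*} [Group G] [AddCommGroup V] [Module ℂ V] [AddCommGroup W]
    [Module ℂ W] (σ : Representation ℂ G V) (ρ : Representation ℂ G W) : Prop :=
  ∃ e : V ≃ₗ[ℂ] W, ∀ (g : G) (v : V), e (σ g v) = ρ g (e v)

/-- Restriction of a representation to an invariant submodule. -/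
def resSub {G V : Type*} [Group G] [AddCommGroup V] [Module ℂ V]
    (ρ : Representation ℂ G V) (W : Submodule ℂ V) (h : ∀ g : G, ∀ v ∈ W, ρ g v ∈ W) :
    Representation ℂ G W where
  toFun g := (ρ g).restrict (h g)
  map_one' := by ext w; simp [LinearMap.restrict_apply]
  map_mul' g g' := by ext w; simp [LinearMap.restrict_apply]

/-- The tensor product (twist) of a representation with a one-dimensional character. -/
def charTwist {G V : Type*} [Group G] [AddCommGroup V] [Module ℂ V]
    (χ : G →* ℂˣ) (ρ : Representation ℂ G V) : Representation ℂ G V where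
  toFun g := (χ g : ℂ) • ρ g
  map_one' := by simp
  map_mul' g g' := by
    ext v
    show (↑(χ (g * g')) : ℂ) • ρ (g * g') v = ((χ g : ℂ) • ρ g) (((χ g' : ℂ) • ρ g') v)
    rw [map_mul, map_mul, Units.val_mul, LinearMap.smul_apply, LinearMap.smul_apply,
      Module.End.mul_apply, map_smul, mul_smul, smul_comm]

end
noncomputable section ExtPart

lemma map_mem_exteriorPower {M N : Type*} [AddCommGroup M] [Module ℂ M] [AddCommGroup N]
    [Module ℂ N] (f : M →ₗ[ℂ] N) (j : ℕ) {x : ExteriorAlgebra ℂ M} (hx : x ∈ ⋀[ℂ]^j M) :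
    ExteriorAlgebra.map f x ∈ ⋀[ℂ]^j N := by
  rw [← ExteriorAlgebra.ιMulti_span_fixedDegree] at hx ⊢
  induction hx using Submodule.span_induction with
  | mem x h =>
    obtain ⟨v, rfl⟩ := h
    rw [ExteriorAlgebra.map_apply_ιMulti]
    exact Submodule.subset_span ⟨_, rfl⟩
  | zero => simp
  | add x y _ _ hx hy => rw [map_add]; exact Submodule.add_mem _ hx hy
  | smul c x _ hx => rw [map_smul]; exact Submodule.smul_mem _ c hx

/-- Given a group `G` mapped into `n × n` complex matrices by a homomorphism `φ`, the induced
representation of `G` on the `j`-th exterior power `⋀^j(ℂ^n)`, obtained functorially from the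
standard representation on `ℂ^n`. -/
def extPowRep {n : ℕ} {G : Type*} [Group G] (φ : G →* Matrix (Fin n) (Fin n) ℂ) (j : ℕ) :
    Representation ℂ G (⋀[ℂ]^j (Fin n → ℂ)) where
  toFun g := ((ExteriorAlgebra.map (Matrix.toLin' (φ g))).toLinearMap).restrict
    fun x hx => map_mem_exteriorPower _ j hx
  map_one' := by
    refine LinearMap.ext fun x => Subtype.ext ?_
    show ExteriorAlgebra.map (Matrix.toLin' (φ 1)) (x : ExteriorAlgebra ℂ (Fin n → ℂ))
      = (x : ExteriorAlgebra ℂ (Fin n → ℂ))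
    rw [map_one, Matrix.toLin'_one, ExteriorAlgebra.map_id, AlgHom.id_apply]
  map_mul' g h := by
    refine LinearMap.ext fun x => Subtype.ext ?_
    show ExteriorAlgebra.map (Matrix.toLin' (φ (g * h))) (x : ExteriorAlgebra ℂ (Fin n → ℂ))
      = ExteriorAlgebra.map (Matrix.toLin' (φ g))
          (ExteriorAlgebra.map (Matrix.toLin' (φ h)) (x : ExteriorAlgebra ℂ (Fin n → ℂ)))
    rw [map_mul, Matrix.toLin'_mul, ← ExteriorAlgebra.map_comp_map, AlgHom.comp_apply]

/-- The wedge product `e_{s 0} ∧ ⋯ ∧ e_{s (j-1)}` of standard basis vectors of `ℂ^n`, as an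
element of the `j`-th exterior power `⋀^j(ℂ^n)`. -/
def wedgeVec {n : ℕ} (j : ℕ) (s : Fin j → Fin n) : ⋀[ℂ]^j (Fin n → ℂ) :=
  ⟨ExteriorAlgebra.ιMulti ℂ j fun t => Pi.single (s t) (1 : ℂ),
    ExteriorAlgebra.ιMulti_range ℂ j (Set.mem_range_self _)⟩

end ExtPart
noncomputable section SUPart

open Matrix

/-- `SU(n)`: the subgroup of the unitary group `U(n)` of matrices of determinant `1`. -/
def SUgrp (n : ℕ) : Subgroup (Matrix.unitaryGroup (Fin n) ℂ) where
  carrier := {g | Matrix.det (g : Matrix (Fin n) (Fin n) ℂ) = 1}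
  one_mem' := by
    show Matrix.det ((1 : Matrix.unitaryGroup (Fin n) ℂ) : Matrix (Fin n) (Fin n) ℂ) = 1
    rw [OneMemClass.coe_one, Matrix.det_one]
  mul_mem' := by
    intro a b ha hb
    show Matrix.det ((a * b : Matrix.unitaryGroup (Fin n) ℂ) : Matrix (Fin n) (Fin n) ℂ) = 1
    rw [MulMemClass.coe_mul, Matrix.det_mul, ha, hb, one_mul]
  inv_mem' := by
    intro a ha
    show Matrix.det ((a⁻¹ : Matrix.unitaryGroup (Fin n) ℂ) : Matrix (Fin n) (Fin n) ℂ) = 1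
    have h1 : (a : Matrix (Fin n) (Fin n) ℂ) *
        ((a⁻¹ : Matrix.unitaryGroup (Fin n) ℂ) : Matrix (Fin n) (Fin n) ℂ) = 1 := by
      rw [← MulMemClass.coe_mul, mul_inv_cancel, OneMemClass.coe_one]
    have h2 := congrArg Matrix.det h1
    rw [Matrix.det_mul, Matrix.det_one, ha, one_mul] at h2
    exact h2

/-- The coercion of `SU(m)` into complex matrices, as a monoid homomorphism. -/
def suCoeHom (m : ℕ) : SUgrp m →* Matrix (Fin m) (Fin m) ℂ :=
  (Submonoid.subtype (Matrix.unitaryGroup (Fin m) ℂ)).comp (SUgrp m).subtype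

/-- The index identification `Fin 2 × Fin r ≃ Fin (2r)` sending `(a, k) ↦ 2k + a`, so that
the `k`-th block occupies the consecutive pair of indices `2k, 2k+1`. -/
def pairEquiv (r : ℕ) : Fin 2 × Fin r ≃ Fin (2 * r) :=
  (Equiv.prodComm (Fin 2) (Fin r)).trans
    ((finProdFinEquiv : Fin r × Fin 2 ≃ Fin (r * 2)).trans (finCongr (by ring)))

/-- The block-diagonal embedding `(A₁, …, A_r) ↦ diag(A₁, …, A_r)` of `SU(2)^r` into the
monoid of `2r × 2r` complex matrices, with `A_k` occupying rows and columns `2k-1, 2k`. -/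
def suBlockMatrixHom (r : ℕ) : (Fin r → SUgrp 2) →* Matrix (Fin (2 * r)) (Fin (2 * r)) ℂ where
  toFun B := Matrix.reindexAlgEquiv ℂ ℂ (pairEquiv r)
    (Matrix.blockDiagonal fun k => suCoeHom 2 (B k))
  map_one' := by
    have h : (fun k : Fin r => suCoeHom 2 ((1 : Fin r → SUgrp 2) k))
        = fun _ => (1 : Matrix (Fin 2) (Fin 2) ℂ) := by
      funext k
      show suCoeHom 2 1 = 1
      rw [_root_.map_one]
    show Matrix.reindexAlgEquiv ℂ ℂ (pairEquiv r)
      (Matrix.blockDiagonal fun k : Fin r => suCoeHom 2 ((1 : Fin r → SUgrp 2) k)) = 1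
    rw [h]
    have h2 : (fun _ : Fin r => (1 : Matrix (Fin 2) (Fin 2) ℂ))
        = (1 : Fin r → Matrix (Fin 2) (Fin 2) ℂ) := rfl
    rw [h2, Matrix.blockDiagonal_one, _root_.map_one]
  map_mul' B C := by
    have h : (fun k : Fin r => suCoeHom 2 ((B * C) k))
        = fun k => suCoeHom 2 (B k) * suCoeHom 2 (C k) := by
      funext k
      show suCoeHom 2 (B k * C k) = _
      rw [_root_.map_mul]
    show Matrix.reindexAlgEquiv ℂ ℂ (pairEquiv r)
        (Matrix.blockDiagonal fun k : Fin r => suCoeHom 2 ((B * C) k))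
      = Matrix.reindexAlgEquiv ℂ ℂ (pairEquiv r)
          (Matrix.blockDiagonal fun k : Fin r => suCoeHom 2 (B k)) *
        Matrix.reindexAlgEquiv ℂ ℂ (pairEquiv r)
          (Matrix.blockDiagonal fun k : Fin r => suCoeHom 2 (C k))
    rw [h, Matrix.blockDiagonal_mul, _root_.map_mul]

lemma suBlockMatrixHom_mem_unitary (r : ℕ) (B : Fin r → SUgrp 2) :
    suBlockMatrixHom r B ∈ Matrix.unitaryGroup (Fin (2 * r)) ℂ := by
  rw [Matrix.mem_unitaryGroup_iff]
  have hD : ∀ k : Fin r, suCoeHom 2 (B k) * (suCoeHom 2 (B k))ᴴ = 1 := by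
    intro k
    rw [← Matrix.star_eq_conjTranspose]
    exact Unitary.mul_star_self_of_mem (B k).1.2
  
  show Matrix.reindexAlgEquiv ℂ ℂ (pairEquiv r)
      (Matrix.blockDiagonal fun k => suCoeHom 2 (B k)) *
    star (Matrix.reindexAlgEquiv ℂ ℂ (pairEquiv r)
      (Matrix.blockDiagonal fun k => suCoeHom 2 (B k))) = 1
  rw [Matrix.star_eq_conjTranspose, Matrix.reindexAlgEquiv_apply,
    Matrix.conjTranspose_reindex, Matrix.blockDiagonal_conjTranspose,
    ← Matrix.reindexAlgEquiv_apply ℂ ℂ (pairEquiv r),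
    ← Matrix.reindexAlgEquiv_apply ℂ ℂ (pairEquiv r), ← _root_.map_mul,
    ← Matrix.blockDiagonal_mul]
  have h1 : (fun k => suCoeHom 2 (B k) * (suCoeHom 2 (B k))ᴴ)
      = fun _ => (1 : Matrix (Fin 2) (Fin 2) ℂ) := funext fun k => hD k
  rw [h1]
  have h2 : (fun _ : Fin r => (1 : Matrix (Fin 2) (Fin 2) ℂ))
      = (1 : Fin r → Matrix (Fin 2) (Fin 2) ℂ) := rfl
  rw [h2, Matrix.blockDiagonal_one, _root_.map_one]

/-- The block-diagonal embedding of `SU(2)^r` into the unitary group `U(2r)`, `n = 2r` even: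
`(A₁, …, A_r) ↦ diag(A₁, …, A_r)`. -/
def suBlockHom (r : ℕ) : (Fin r → SUgrp 2) →* Matrix.unitaryGroup (Fin (2 * r)) ℂ :=
  (suBlockMatrixHom r).codRestrict (Matrix.unitaryGroup (Fin (2 * r)) ℂ)
    (suBlockMatrixHom_mem_unitary r)

end SUPart

/-!
Every factor of `SU(2)^r` has determinant one, so the wedge `e_{2k} ∧ e_{2k+1}` of each block is
invariant, and so is the wedge of any `m` complete blocks. For `n = 2m`, two different choices of
`m` blocks give two linearly independent fixed vectors, i.e. two copies of the trivial
representation. For `n = 2m + 1`, fix a block `k` and two different choices of `m` other blocks,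
with wedges `w` and `w'`: then `v ↦ v ∧ w` and `v ↦ v ∧ w'` are two independent embeddings of the
standard representation `ℂ²` of the `k`-th factor, which is irreducible because it is moved by
`diag(i, -i)` and by `[[0, 1], [-1, 0]]`. The bound `n ≤ 2r - 2` leaves room for the second choice.
-/

section Multiplicity

variable {G W : Type*} [Group G] [AddCommGroup W] [Module ℂ W]

lemma isIrred_trivial : IsIrred (Representation.trivial ℂ G ℂ) :=
  ⟨inferInstance, fun U _ => Ideal.eq_bot_or_top U⟩

lemma LinearMap.linearIndependent_pair_of_apply {V : Type*} [AddCommGroup V] [Module ℂ V]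
    {F₁ F₂ : V →ₗ[ℂ] W} (x : V) (h : LinearIndependent ℂ ![F₁ x, F₂ x]) :
    LinearIndependent ℂ ![F₁, F₂] := by
  refine LinearIndependent.of_comp (LinearMap.applyₗ x) ?_
  convert h using 1
  ext i
  fin_cases i <;> rfl

lemma not_multFree_of_linearIndependent [Module.Finite ℂ W] (ρ : Representation ℂ G W)
    {V : Type} [AddCommGroup V] [Module ℂ V] [FiniteDimensional ℂ V]
    {σ : Representation ℂ G V} (hσ : IsIrred σ) {F₁ F₂ : V →ₗ[ℂ] W}
    (h₁ : F₁ ∈ EquivMaps σ ρ) (h₂ : F₂ ∈ EquivMaps σ ρ) (hF : LinearIndependent ℂ ![F₁, F₂]) :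
    ¬ MultFree ρ := by
  intro hρ
  have hli : LinearIndependent ℂ ![(⟨F₁, h₁⟩ : EquivMaps σ ρ), ⟨F₂, h₂⟩] := by
    refine LinearIndependent.of_comp (EquivMaps σ ρ).subtype ?_
    convert hF using 1
    ext i
    fin_cases i <;> rfl
  have h2 := hli.fintype_card_le_finrank
  rw [Fintype.card_fin] at h2
  exact absurd (hρ V σ hσ) (by omega)

lemma toSpanSingleton_mem_equivMaps_trivial (ρ : Representation ℂ G W) {w : W}
    (hw : ∀ g, ρ g w = w) :
    LinearMap.toSpanSingleton ℂ W w ∈ EquivMaps (Representation.trivial ℂ G ℂ) ρ := by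
  intro g
  ext
  simp [hw]

lemma not_multFree_of_fixed_pair [Module.Finite ℂ W] (ρ : Representation ℂ G W) {w₁ w₂ : W}
    (hw : LinearIndependent ℂ ![w₁, w₂]) (h₁ : ∀ g, ρ g w₁ = w₁) (h₂ : ∀ g, ρ g w₂ = w₂) :
    ¬ MultFree ρ :=
  not_multFree_of_linearIndependent ρ isIrred_trivial
    (toSpanSingleton_mem_equivMaps_trivial ρ h₁) (toSpanSingleton_mem_equivMaps_trivial ρ h₂)
    (LinearMap.linearIndependent_pair_of_apply 1 (by simpa using hw))

end Multiplicity

lemma LinearIndependent.pair_of_ne {ι R M : Type*} [Ring R] [AddCommGroup M] [Module R M]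
    {v : ι → M} (hv : LinearIndependent R v) {i j : ι} (hij : i ≠ j) :
    LinearIndependent R ![v i, v j] := by
  have hinj : Function.Injective ![i, j] := by
    intro a b
    fin_cases a <;> fin_cases b <;> simp [hij, hij.symm]
  convert hv.comp _ hinj using 1
  ext k
  fin_cases k <;> rfl

section ExteriorAlgebra

open ExteriorAlgebra

variable {R M : Type*} [CommRing R] [AddCommGroup M] [Module R M]

lemma exteriorPower.linearIndependent_ιMulti_single_pair {N n : ℕ} {c₁ c₂ : Fin n → Fin N}
    (h₁ : StrictMono c₁) (h₂ : StrictMono c₂) (hne : c₁ ≠ c₂) :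
    LinearIndependent R ![exteriorPower.ιMulti R n fun t => (Pi.single (c₁ t) 1 : Fin N → R),
      exteriorPower.ιMulti R n fun t => (Pi.single (c₂ t) 1 : Fin N → R)] := by
  set s : (Fin n ↪o Fin N) ≃ Set.powersetCard (Fin N) n := Set.powersetCard.ofFinEmbEquiv
  have hs : ∀ (c : Fin n → Fin N) (hc : StrictMono c),
      exteriorPower.ιMulti_family R n (Pi.basisFun R (Fin N))
          (s (OrderEmbedding.ofStrictMono c hc))
        = exteriorPower.ιMulti R n fun t => (Pi.single (c t) 1 : Fin N → R) := by
    intro c hc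
    rw [exteriorPower.ιMulti_family, Equiv.symm_apply_apply]
    congr 1
    ext t
    simp
  rw [← hs c₁ h₁, ← hs c₂ h₂]
  refine (exteriorPower.ιMulti_family_linearIndependent_ofBasis R n _).pair_of_ne ?_
  intro h
  exact hne (funext fun t => congrArg (fun f : Fin n ↪o Fin N => f t) (s.injective h))

lemma ExteriorAlgebra.ι_mul_ι_eq_det_smul (x y : M) (A : Matrix (Fin 2) (Fin 2) R) :
    ι R (A 0 0 • x + A 1 0 • y) * ι R (A 0 1 • x + A 1 1 • y) = A.det • (ι R x * ι R y) := by
  have hyx : ι R y * ι R x = -(ι R x * ι R y) := by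
    linear_combination (norm := module) ι_add_mul_swap (R := R) x y
  simp only [map_add, map_smul, add_mul, mul_add, smul_mul_assoc, mul_smul_comm, ι_sq_zero,
    smul_zero, hyx, Matrix.det_fin_two]
  module

lemma ExteriorAlgebra.ιMulti_two_mul {m : ℕ} (v : Fin (2 * m) → M) :
    ιMulti R (2 * m) v
      = (List.ofFn fun k : Fin m =>
          ι R (v ⟨2 * k, by omega⟩) * ι R (v ⟨2 * k + 1, by omega⟩)).prod := by
  rw [ιMulti_apply, List.ofFn_mul', List.prod_flatten, List.map_ofFn]
  congr 1
  refine List.ofFn_inj.2 (funext fun k => ?_)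
  simp [List.ofFn_succ]

lemma ExteriorAlgebra.ι_mul_mem_exteriorPower (v : M) {k : ℕ} {x : ExteriorAlgebra R M}
    (hx : x ∈ ⋀[R]^k M) : ι R v * x ∈ ⋀[R]^(k + 1) M := by
  rw [exteriorPower, pow_succ']
  exact Submodule.mul_mem_mul (LinearMap.mem_range_self _ v) hx

def exteriorPower.wedgeRight {k : ℕ} (Q : ⋀[R]^k M) : M →ₗ[R] ⋀[R]^(k + 1) M :=
  ((LinearMap.mulRight R (Q : ExteriorAlgebra R M)).comp (ι R)).codRestrict _
    fun v => ι_mul_mem_exteriorPower v Q.2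

lemma exteriorPower.wedgeRight_apply_coe {k : ℕ} (Q : ⋀[R]^k M) (v : M) :
    (wedgeRight Q v : ExteriorAlgebra R M) = ι R v * Q := rfl

end ExteriorAlgebra

section ExtPowRep

variable {N : ℕ} {G : Type*} [Group G] (φ : G →* Matrix (Fin N) (Fin N) ℂ)

lemma extPowRep_apply_coe (j : ℕ) (g : G) (w : ⋀[ℂ]^j (Fin N → ℂ)) :
    (extPowRep φ j g w : ExteriorAlgebra ℂ (Fin N → ℂ))
      = ExteriorAlgebra.map (Matrix.toLin' (φ g)) (w : ExteriorAlgebra ℂ (Fin N → ℂ)) := rfl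

lemma wedgeRight_comp_mem_equivMaps {V : Type*} [AddCommGroup V] [Module ℂ V]
    {σ : Representation ℂ G V} {L : V →ₗ[ℂ] Fin N → ℂ}
    (hL : ∀ g v, Matrix.toLin' (φ g) (L v) = L (σ g v)) {k : ℕ} {Q : ⋀[ℂ]^k (Fin N → ℂ)}
    (hQ : ∀ g, extPowRep φ k g Q = Q) :
    (exteriorPower.wedgeRight Q).comp L ∈ EquivMaps σ (extPowRep φ (k + 1)) := by
  intro g
  ext v : 1
  apply Subtype.ext
  simp only [LinearMap.comp_apply, extPowRep_apply_coe, exteriorPower.wedgeRight_apply_coe,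
    map_mul, ExteriorAlgebra.map_apply_ι, hL]
  rw [← extPowRep_apply_coe, hQ]

end ExtPowRep

section Blocks

open ExteriorAlgebra

variable {r : ℕ}

lemma pairEquiv_val (a : Fin 2) (k : Fin r) : (pairEquiv r (a, k) : ℕ) = 2 * k + a := by
  simp [pairEquiv, finProdFinEquiv]
  omega

lemma suBlockMatrixHom_apply_pairEquiv (g : Fin r → SUgrp 2) (p q : Fin 2 × Fin r) :
    suBlockMatrixHom r g (pairEquiv r p) (pairEquiv r q)
      = if p.2 = q.2 then suCoeHom 2 (g p.2) p.1 q.1 else 0 := by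
  change Matrix.reindexAlgEquiv ℂ ℂ (pairEquiv r)
    (Matrix.blockDiagonal fun k => suCoeHom 2 (g k)) (pairEquiv r p) (pairEquiv r q) = _
  simp [Matrix.blockDiagonal_apply]

variable (r) in
def blockVec (a : Fin 2) (k : Fin r) : Fin (2 * r) → ℂ := Pi.single (pairEquiv r (a, k)) 1

lemma toLin'_suBlockMatrixHom_blockVec (g : Fin r → SUgrp 2) (a : Fin 2) (k : Fin r) :
    Matrix.toLin' (suBlockMatrixHom r g) (blockVec r a k)
      = ∑ b, suCoeHom 2 (g k) b a • blockVec r b k := by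
  ext i
  obtain ⟨⟨b, l⟩, rfl⟩ := (pairEquiv r).surjective i
  rw [blockVec, Matrix.toLin'_apply, Matrix.mulVec_single_one, Matrix.col_apply,
    suBlockMatrixHom_apply_pairEquiv]
  simp only [Finset.sum_apply, Pi.smul_apply, blockVec, Pi.single_apply,
    (pairEquiv r).injective.eq_iff, Prod.mk.injEq, smul_eq_mul, mul_ite, mul_one, mul_zero]
  split_ifs with hl <;> fin_cases b <;> simp [hl]

lemma ι_map_blockVec_mul_ι_map_blockVec (g : Fin r → SUgrp 2) (k : Fin r) :
    ι ℂ (Matrix.toLin' (suBlockMatrixHom r g) (blockVec r 0 k))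
        * ι ℂ (Matrix.toLin' (suBlockMatrixHom r g) (blockVec r 1 k))
      = ι ℂ (blockVec r 0 k) * ι ℂ (blockVec r 1 k) := by
  have hdet : (suCoeHom 2 (g k)).det = 1 := (g k).2
  simp only [toLin'_suBlockMatrixHom_blockVec, Fin.sum_univ_two]
  rw [ι_mul_ι_eq_det_smul, hdet, one_smul]

variable (r) in
def blockIdx {m : ℕ} (β : Fin m → Fin r) (t : Fin (2 * m)) : Fin (2 * r) :=
  pairEquiv r (⟨t % 2, by omega⟩, β ⟨t / 2, by omega⟩)

lemma blockIdx_val {m : ℕ} (β : Fin m → Fin r) (t : Fin (2 * m)) :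
    (blockIdx r β t : ℕ) = 2 * β ⟨t / 2, by omega⟩ + t % 2 := by
  rw [blockIdx, pairEquiv_val]

lemma blockIdx_two_mul {m : ℕ} (β : Fin m → Fin r) (k : Fin m) :
    blockIdx r β ⟨2 * k, by omega⟩ = pairEquiv r (0, β k) :=
  congrArg (pairEquiv r) (Prod.ext (by ext; simp) (by ext; simp))

lemma blockIdx_two_mul_add_one {m : ℕ} (β : Fin m → Fin r) (k : Fin m) :
    blockIdx r β ⟨2 * k + 1, by omega⟩ = pairEquiv r (1, β k) :=
  congrArg (pairEquiv r) (Prod.ext (by ext; simp) (congrArg β (Fin.ext (by simp; omega))))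

lemma blockIdx_strictMono {m : ℕ} {β : Fin m → Fin r} (hβ : StrictMono β) :
    StrictMono (blockIdx r β) := by
  intro s t hst
  rw [Fin.lt_def] at hst
  have hle : (β ⟨s / 2, by omega⟩ : ℕ) ≤ β ⟨t / 2, by omega⟩ :=
    hβ.monotone (Fin.mk_le_mk.2 (Nat.div_le_div_right hst.le))
  have hlt : (s : ℕ) / 2 < t / 2 → (β ⟨s / 2, by omega⟩ : ℕ) < β ⟨t / 2, by omega⟩ :=
    fun h => hβ (Fin.mk_lt_mk.2 h)
  rw [Fin.lt_def, blockIdx_val, blockIdx_val]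
  omega

lemma blockIdx_injective {m : ℕ} : Function.Injective (blockIdx r (m := m)) := by
  intro β γ h
  ext1 k
  have := congrFun h ⟨2 * k, by omega⟩
  rw [blockIdx_two_mul, blockIdx_two_mul] at this
  exact congrArg Prod.snd ((pairEquiv r).injective this)

lemma map_ιMulti_blockIdx (g : Fin r → SUgrp 2) {m : ℕ} (β : Fin m → Fin r) :
    ExteriorAlgebra.map (Matrix.toLin' (suBlockMatrixHom r g))
        (ιMulti ℂ (2 * m) fun t => Pi.single (blockIdx r β t) 1)
      = ιMulti ℂ (2 * m) fun t => Pi.single (blockIdx r β t) 1 := by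
  rw [map_apply_ιMulti, ιMulti_two_mul, ιMulti_two_mul]
  congr 1
  refine List.ofFn_inj.2 (funext fun k => ?_)
  simp only [Function.comp_apply, blockIdx_two_mul, blockIdx_two_mul_add_one]
  exact ι_map_blockVec_mul_ι_map_blockVec g (β k)

end Blocks

section StandardRep

open Complex

lemma isIrred_of_diag_of_swap {G : Type*} [Group G] (σ : Representation ℂ G (Fin 2 → ℂ))
    {d j : G} (hd : σ d = Matrix.toLin' !![I, 0; 0, -I])
    (hj : σ j = Matrix.toLin' !![0, 1; -1, 0]) : IsIrred σ := by
  refine ⟨inferInstance, fun W hW => or_iff_not_imp_left.2 fun hne => ?_⟩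
  obtain ⟨v, hvW, hv⟩ := W.ne_bot_iff.1 hne
  have hdv : σ d v ∈ W := hW d v hvW
  have hdv_eq : σ d v = ![I * v 0, -(I * v 1)] := by
    rw [hd]
    ext i
    fin_cases i <;> simp [Matrix.vecHead, Matrix.vecTail]
  have hsingle : ∀ a, Pi.single a (v a) ∈ W := by
    have hproj : ∀ a, Pi.single a (v a)
        = (2 : ℂ)⁻¹ • (v + (if a = 0 then -I else I) • σ d v) := by
      intro a
      ext i
      fin_cases a <;> fin_cases i <;>
        simp [hdv_eq, Matrix.vecHead, Matrix.vecTail, ← mul_assoc] <;> ring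
    intro a
    rw [hproj]
    exact W.smul_mem _ (W.add_mem hvW (W.smul_mem _ hdv))
  have hbasis : ∃ a, Pi.single a (1 : ℂ) ∈ W := by
    obtain ⟨a, ha⟩ := Function.ne_iff.1 hv
    refine ⟨a, ?_⟩
    have := W.smul_mem (v a)⁻¹ (hsingle a)
    rwa [← Pi.single_smul, smul_eq_mul, inv_mul_cancel₀ ha] at this
  have hswap : Pi.single 0 (1 : ℂ) ∈ W ↔ Pi.single 1 (1 : ℂ) ∈ W := by
    have h₀ : σ j (Pi.single 0 1) = -Pi.single 1 1 := by
      rw [hj]; ext i; fin_cases i <;> simp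
    have h₁ : σ j (Pi.single 1 1) = Pi.single 0 1 := by
      rw [hj]; ext i; fin_cases i <;> simp
    refine ⟨fun h => ?_, fun h => h₁ ▸ hW j _ h⟩
    simpa [h₀] using hW j _ h
  have hall : ∀ a, Pi.single a (1 : ℂ) ∈ W := by
    obtain ⟨a, ha⟩ := hbasis
    fin_cases a <;> simp_all [Fin.forall_fin_two]
  rw [eq_top_iff, ← (Pi.basisFun ℂ (Fin 2)).span_eq, Submodule.span_le]
  rintro _ ⟨a, rfl⟩
  simpa using hall a

end StandardRep

section BlockRep

open Complex

variable {r : ℕ}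

def blockRep (k : Fin r) : Representation ℂ (Fin r → SUgrp 2) (Fin 2 → ℂ) :=
  (Matrix.toLinAlgEquiv' : Matrix (Fin 2) (Fin 2) ℂ ≃ₐ[ℂ] _).toMonoidHom.comp
    ((suCoeHom 2).comp (Pi.evalMonoidHom _ k))

lemma blockRep_apply (k : Fin r) (g : Fin r → SUgrp 2) :
    blockRep k g = Matrix.toLin' (suCoeHom 2 (g k)) := rfl

lemma exists_suCoeHom_eq {A : Matrix (Fin 2) (Fin 2) ℂ} (hA : A * star A = 1)
    (hdet : A.det = 1) :
    ∃ u : SUgrp 2, suCoeHom 2 u = A :=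
  ⟨⟨⟨A, Matrix.mem_unitaryGroup_iff.2 hA⟩, hdet⟩, rfl⟩

lemma isIrred_blockRep (k : Fin r) : IsIrred (blockRep k) := by
  obtain ⟨d, hd⟩ := exists_suCoeHom_eq (A := !![I, 0; 0, -I])
    (by ext i j; fin_cases i <;> fin_cases j <;> simp [Matrix.mul_apply, Complex.mul_conj])
    (by simp [Matrix.det_fin_two_of])
  obtain ⟨j, hj⟩ := exists_suCoeHom_eq (A := !![0, 1; -1, 0])
    (by ext i j; fin_cases i <;> fin_cases j <;> simp [Matrix.mul_apply])
    (by simp [Matrix.det_fin_two_of])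
  exact isIrred_of_diag_of_swap _ (d := Function.const _ d) (j := Function.const _ j)
    (by rw [blockRep_apply, Function.const_apply, hd])
    (by rw [blockRep_apply, Function.const_apply, hj])

def blockEmb (k : Fin r) : (Fin 2 → ℂ) →ₗ[ℂ] Fin (2 * r) → ℂ :=
  Fintype.linearCombination ℂ fun a => blockVec r a k

lemma toLin'_suBlockMatrixHom_blockEmb (k : Fin r) (g : Fin r → SUgrp 2) (v : Fin 2 → ℂ) :
    Matrix.toLin' (suBlockMatrixHom r g) (blockEmb k v) = blockEmb k (blockRep k g v) := by
  simp only [blockEmb, Fintype.linearCombination_apply, map_sum, map_smul,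
    toLin'_suBlockMatrixHom_blockVec, Finset.smul_sum, smul_smul]
  simp only [blockRep_apply, Matrix.toLin'_apply, Matrix.mulVec, dotProduct, Finset.sum_smul]
  rw [Finset.sum_comm]
  simp only [mul_comm]

end BlockRep

section BlockWedge

open ExteriorAlgebra

variable {r m : ℕ}

variable (r) in
def blockWedge (β : Fin m → Fin r) : ⋀[ℂ]^(2 * m) (Fin (2 * r) → ℂ) :=
  exteriorPower.ιMulti ℂ (2 * m) fun t => Pi.single (blockIdx r β t) 1

lemma extPowRep_blockWedge (g : Fin r → SUgrp 2) (β : Fin m → Fin r) :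
    extPowRep (suBlockMatrixHom r) (2 * m) g (blockWedge r β) = blockWedge r β :=
  Subtype.ext (map_ιMulti_blockIdx g β)

lemma linearIndependent_blockWedge {β γ : Fin m → Fin r} (hβ : StrictMono β)
    (hγ : StrictMono γ) (hne : β ≠ γ) :
    LinearIndependent ℂ ![blockWedge r β, blockWedge r γ] :=
  exteriorPower.linearIndependent_ιMulti_single_pair (blockIdx_strictMono hβ)
    (blockIdx_strictMono hγ) (blockIdx_injective.ne hne)

lemma coe_blockWedge_eq (β : Fin m → Fin r) {c : Fin (2 * m) → Fin (2 * r)}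
    (hc : ∀ t, (c t : ℕ) = 2 * β ⟨t / 2, by omega⟩ + t % 2) :
    (blockWedge r β : ExteriorAlgebra ℂ (Fin (2 * r) → ℂ))
      = ExteriorAlgebra.ιMulti ℂ (2 * m) fun t => Pi.single (c t) 1 := by
  have : blockIdx r β = c := funext fun t => Fin.ext (by rw [blockIdx_val, hc])
  rw [← this]
  rfl

lemma wedgeRight_blockWedge_blockVec (β : Fin m → Fin r) (a : Fin 2) (k : Fin r) :
    exteriorPower.wedgeRight (blockWedge r β) (blockVec r a k)
      = exteriorPower.ιMulti ℂ (2 * m + 1)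
          fun t => Pi.single (Fin.cons (pairEquiv r (a, k)) (blockIdx r β) t) 1 := by
  apply Subtype.ext
  rw [exteriorPower.wedgeRight_apply_coe, exteriorPower.ιMulti_apply_coe, ιMulti_succ_apply]
  rfl

lemma pairEquiv_lt_blockIdx {β : Fin m → Fin r} {k : Fin r} (hk : ∀ l, k < β l) (a : Fin 2)
    (t : Fin (2 * m)) : pairEquiv r (a, k) < blockIdx r β t := by
  have := hk ⟨t / 2, by omega⟩
  rw [Fin.lt_def] at this ⊢
  rw [pairEquiv_val, blockIdx_val]
  omega

lemma not_multFree_extPowRep_odd {β γ : Fin m → Fin r} (hβ : StrictMono β) (hγ : StrictMono γ)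
    (hne : β ≠ γ) {k : Fin r} (hkβ : ∀ l, k < β l) (hkγ : ∀ l, k < γ l) :
    ¬ MultFree (extPowRep (suBlockMatrixHom r) (2 * m + 1)) := by
  have hequiv : ∀ δ : Fin m → Fin r, (exteriorPower.wedgeRight (blockWedge r δ)).comp
      (blockEmb k) ∈ EquivMaps (blockRep k) (extPowRep (suBlockMatrixHom r) (2 * m + 1)) :=
    fun δ => wedgeRight_comp_mem_equivMaps _ (toLin'_suBlockMatrixHom_blockEmb k)
      (extPowRep_blockWedge · δ)
  have he₀ : blockEmb k (Pi.single 0 1) = blockVec r 0 k := by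
    simp [blockEmb]
  refine not_multFree_of_linearIndependent _ (isIrred_blockRep k) (hequiv β) (hequiv γ)
    (LinearMap.linearIndependent_pair_of_apply (Pi.single 0 1) ?_)
  simp only [LinearMap.comp_apply, he₀, wedgeRight_blockWedge_blockVec]
  refine exteriorPower.linearIndependent_ιMulti_single_pair ?_ ?_ ?_
  · exact Fin.strictMono_cons.2 ⟨pairEquiv_lt_blockIdx hkβ 0, blockIdx_strictMono hβ⟩
  · exact Fin.strictMono_cons.2 ⟨pairEquiv_lt_blockIdx hkγ 0, blockIdx_strictMono hγ⟩
  · exact fun h => hne (blockIdx_injective (Fin.cons_right_injective _ h))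

end BlockWedge

lemma exists_two_blockChoices {r m : ℕ} (s : ℕ) (hm : 1 ≤ m) (hr : s + m + 1 ≤ r) :
    ∃ β γ : Fin m → Fin r, StrictMono β ∧ StrictMono γ ∧ β ≠ γ ∧ (∀ k, (β k : ℕ) = s + k) ∧
      ∀ k, (γ k : ℕ) = if (k : ℕ) < m - 1 then s + k else s + k + 1 := by
  refine ⟨fun k => ⟨s + k, by omega⟩,
    fun k => ⟨if (k : ℕ) < m - 1 then s + k else s + k + 1, by split <;> omega⟩,
    fun k l hkl => ?_, fun k l hkl => ?_, fun h => ?_, fun _ => rfl, fun _ => rfl⟩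
  · rw [Fin.lt_def] at hkl ⊢
    dsimp only
    omega
  · rw [Fin.lt_def] at hkl ⊢
    dsimp only
    split_ifs <;> omega
  · have := congrArg Fin.val (congrFun h ⟨m - 1, by omega⟩)
    simp at this

/-- for `r ≥ 2` and `2 ≤ n ≤ 2r-2`, the representation of `SU(2)^r`
(embedded block-diagonally in `U(2r)`) on the exterior power `⋀^n(ℂ^{2r})` is not
multiplicity-free; in particular, for `n` even the vectors
`(e₁∧e₂) ∧ ⋯ ∧ (e_{n-3}∧e_{n-2}) ∧ (e_{n-1}∧e_n)` and
`(e₁∧e₂) ∧ ⋯ ∧ (e_{n-3}∧e_{n-2}) ∧ (e_{n+1}∧e_{n+2})` span two distinct copies of the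
trivial representation of `SU(2)^r`. -/
theorem statement_14 (r n : ℕ) (h2 : 2 ≤ n) (hn : n ≤ 2 * r - 2) :
    ¬ MultFree (extPowRep (suBlockMatrixHom r) n) ∧
    (n % 2 = 0 →
      ∃ w₁ w₂ : ⋀[ℂ]^n (Fin (2 * r) → ℂ),
        (w₁ : ExteriorAlgebra ℂ (Fin (2 * r) → ℂ))
          = ExteriorAlgebra.ιMulti ℂ n (fun t : Fin n =>
              Pi.single (⟨(t : ℕ), by have := t.isLt; omega⟩ : Fin (2 * r)) (1 : ℂ)) ∧
        (w₂ : ExteriorAlgebra ℂ (Fin (2 * r) → ℂ))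
          = ExteriorAlgebra.ιMulti ℂ n (fun t : Fin n =>
              Pi.single (⟨if (t : ℕ) < n - 2 then (t : ℕ) else (t : ℕ) + 2,
                by have := t.isLt; split <;> omega⟩ : Fin (2 * r)) (1 : ℂ)) ∧
        LinearIndependent ℂ ![w₁, w₂] ∧
        ∀ g : Fin r → SUgrp 2,
          extPowRep (suBlockMatrixHom r) n g w₁ = w₁ ∧
          extPowRep (suBlockMatrixHom r) n g w₂ = w₂) := by
  refine (fun heven => ⟨fun hfree => ?notFree, heven⟩) ?even
  case even =>
    intro hpar
    obtain ⟨m, rfl⟩ : ∃ m, n = 2 * m := ⟨n / 2, by omega⟩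
    obtain ⟨β, γ, hβ, hγ, hne, hβv, hγv⟩ :=
      exists_two_blockChoices (r := r) (m := m) 0 (by omega) (by omega)
    refine ⟨blockWedge r β, blockWedge r γ, coe_blockWedge_eq β fun t => ?_,
      coe_blockWedge_eq γ fun t => ?_, linearIndependent_blockWedge hβ hγ hne,
      fun g => ⟨extPowRep_blockWedge g β, extPowRep_blockWedge g γ⟩⟩
    · rw [hβv]
      dsimp only
      omega
    · rw [hγv]
      dsimp only
      split_ifs <;> omega
  case notFree =>
    rcases Nat.even_or_odd' n with ⟨m, rfl | rfl⟩
    · obtain ⟨w₁, w₂, -, -, hli, hfix⟩ := heven (by omega)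
      exact not_multFree_of_fixed_pair _ hli (fun g => (hfix g).1) (fun g => (hfix g).2) hfree
    · obtain ⟨β, γ, hβ, hγ, hne, hβv, hγv⟩ :=
        exists_two_blockChoices (r := r) (m := m) 1 (by omega) (by omega)
      refine not_multFree_extPowRep_odd hβ hγ hne (k := ⟨0, by omega⟩) (fun l => ?_)
        (fun l => ?_) hfree
      · rw [Fin.lt_def, hβv]
        dsimp only
        omega
      · rw [Fin.lt_def, hγv]
        dsimp only
        split_ifs <;> omega
end

section
/- Let U(n) act on the space of complex antisymmetric n×n matrices by A·X = AXAᵀ, and let 𝔞 = Σ_{j=1}^{[n/2]} ℝ(E_{2j−1,2j} − E_{2j,2j−1}). Then the centralizer of 𝔞 in U(n), i.e. { A ∈ U(n) : A(E_{2j−1,2j} − E_{2j,2j−1})Aᵀ = E_{2j−1,2j} − E_{2j,2j−1} for all 1 ≤ j ≤ [n/2] }, equals the block-diagonal subgroup SU(2)^r = { diag(A_1, …, A_r) : A_k ∈ SU(2) } when n = 2r, and equals SU(2)^r × U(1) = { diag(A_1, …, A_r, z) : A_k ∈ SU(2), z ∈ U(1) } when n = 2r+1. -/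
noncomputable section SUOddPart

open Matrix

/-- The block-diagonal embedding `((A₁, …, A_r), z) ↦ diag(A₁, …, A_r, z)` of
`SU(2)^r × U(1)` into the monoid of `(2r+1) × (2r+1)` complex matrices. -/
def suOddMatrixHom (r : ℕ) :
    ((Fin r → SUgrp 2) × unitary ℂ) →* Matrix (Fin (2 * r + 1)) (Fin (2 * r + 1)) ℂ where
  toFun p := Matrix.reindexAlgEquiv ℂ ℂ
    (finSumFinEquiv : Fin (2 * r) ⊕ Fin 1 ≃ Fin (2 * r + 1))
    (Matrix.fromBlocks (suBlockMatrixHom r p.1) 0 0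
      (Matrix.diagonal fun _ : Fin 1 => (p.2 : ℂ)))
  map_one' := by
    show Matrix.reindexAlgEquiv ℂ ℂ (finSumFinEquiv : Fin (2 * r) ⊕ Fin 1 ≃ Fin (2 * r + 1))
      (Matrix.fromBlocks (suBlockMatrixHom r 1) 0 0
        (Matrix.diagonal fun _ : Fin 1 => ((1 : unitary ℂ) : ℂ))) = 1
    rw [_root_.map_one (suBlockMatrixHom r)]
    have h : (fun _ : Fin 1 => ((1 : unitary ℂ) : ℂ)) = fun _ => (1 : ℂ) := rfl
    rw [h, Matrix.diagonal_one, Matrix.fromBlocks_one, _root_.map_one]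
  map_mul' p q := by
    show Matrix.reindexAlgEquiv ℂ ℂ (finSumFinEquiv : Fin (2 * r) ⊕ Fin 1 ≃ Fin (2 * r + 1))
        (Matrix.fromBlocks (suBlockMatrixHom r (p.1 * q.1)) 0 0
          (Matrix.diagonal fun _ : Fin 1 => ((p.2 * q.2 : unitary ℂ) : ℂ)))
      = Matrix.reindexAlgEquiv ℂ ℂ (finSumFinEquiv : Fin (2 * r) ⊕ Fin 1 ≃ Fin (2 * r + 1))
          (Matrix.fromBlocks (suBlockMatrixHom r p.1) 0 0
            (Matrix.diagonal fun _ : Fin 1 => (p.2 : ℂ))) *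
        Matrix.reindexAlgEquiv ℂ ℂ (finSumFinEquiv : Fin (2 * r) ⊕ Fin 1 ≃ Fin (2 * r + 1))
          (Matrix.fromBlocks (suBlockMatrixHom r q.1) 0 0
            (Matrix.diagonal fun _ : Fin 1 => (q.2 : ℂ)))
    rw [← _root_.map_mul, Matrix.fromBlocks_multiply]
    simp only [Matrix.mul_zero, Matrix.zero_mul, add_zero, zero_add,
      Matrix.diagonal_mul_diagonal, ← _root_.map_mul (suBlockMatrixHom r)]
    rfl

lemma suOddMatrixHom_mem_unitary (r : ℕ) (p : (Fin r → SUgrp 2) × unitary ℂ) :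
    suOddMatrixHom r p ∈ Matrix.unitaryGroup (Fin (2 * r + 1)) ℂ := by
  rw [Matrix.mem_unitaryGroup_iff]
  show Matrix.reindexAlgEquiv ℂ ℂ (finSumFinEquiv : Fin (2 * r) ⊕ Fin 1 ≃ Fin (2 * r + 1))
      (Matrix.fromBlocks (suBlockMatrixHom r p.1) 0 0
        (Matrix.diagonal fun _ : Fin 1 => (p.2 : ℂ))) *
    star (Matrix.reindexAlgEquiv ℂ ℂ (finSumFinEquiv : Fin (2 * r) ⊕ Fin 1 ≃ Fin (2 * r + 1))
      (Matrix.fromBlocks (suBlockMatrixHom r p.1) 0 0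
        (Matrix.diagonal fun _ : Fin 1 => (p.2 : ℂ)))) = 1
  rw [Matrix.star_eq_conjTranspose, Matrix.reindexAlgEquiv_apply,
    Matrix.conjTranspose_reindex, Matrix.fromBlocks_conjTranspose,
    ← Matrix.reindexAlgEquiv_apply ℂ ℂ, ← Matrix.reindexAlgEquiv_apply ℂ ℂ,
    ← _root_.map_mul, Matrix.fromBlocks_multiply]
  have hA : suBlockMatrixHom r p.1 * (suBlockMatrixHom r p.1)ᴴ = 1 := by
    rw [← Matrix.star_eq_conjTranspose]
    have hm := suBlockMatrixHom_mem_unitary r p.1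
    rw [Matrix.mem_unitaryGroup_iff] at hm
    exact hm
  have hz : Matrix.diagonal (fun _ : Fin 1 => (p.2 : ℂ)) *
      (Matrix.diagonal fun _ : Fin 1 => (p.2 : ℂ))ᴴ = 1 := by
    rw [Matrix.diagonal_conjTranspose, Matrix.diagonal_mul_diagonal]
    have h : (fun i : Fin 1 => (p.2 : ℂ) * (star (fun _ : Fin 1 => (p.2 : ℂ))) i)
        = fun _ : Fin 1 => (1 : ℂ) := by
      funext i
      show (p.2 : ℂ) * star (p.2 : ℂ) = 1
      exact Unitary.mul_star_self_of_mem p.2.2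
    rw [h, Matrix.diagonal_one]
  simp only [Matrix.mul_zero, Matrix.zero_mul, add_zero, zero_add,
    Matrix.conjTranspose_zero, hA, hz, Matrix.fromBlocks_one, _root_.map_one]

/-- The block-diagonal embedding of `SU(2)^r × U(1)` into the unitary group `U(2r+1)`,
`n = 2r+1` odd: `((A₁, …, A_r), z) ↦ diag(A₁, …, A_r, z)`. -/
def suOddHom (r : ℕ) :
    ((Fin r → SUgrp 2) × unitary ℂ) →* Matrix.unitaryGroup (Fin (2 * r + 1)) ℂ :=
  (suOddMatrixHom r).codRestrict (Matrix.unitaryGroup (Fin (2 * r + 1)) ℂ)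
    (suOddMatrixHom_mem_unitary r)

end SUOddPart
noncomputable section Stmt16Part

/-- The matrix `E_{2j,2j+1} - E_{2j+1,2j}` (`0`-based indices), spanning the Cartan
subspace `𝔞` for the Hermitian symmetric pair `(SO*(2n), U(n))`. -/
def aBasisMat (n j : ℕ) (h : 2 * j + 1 < n) : Matrix (Fin n) (Fin n) ℂ :=
  Matrix.single (⟨2 * j, by omega⟩ : Fin n) (⟨2 * j + 1, h⟩ : Fin n) (1 : ℂ) -
    Matrix.single (⟨2 * j + 1, h⟩ : Fin n) (⟨2 * j, by omega⟩ : Fin n) (1 : ℂ)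

open Matrix

section GeneralMatrices

variable {l m α : Type*} [Fintype l] [DecidableEq l] [Fintype m] [DecidableEq m]

lemma submatrix_mem_unitaryGroup [CommRing α] [StarRing α] {A : Matrix m m α}
    (hA : A ∈ unitaryGroup m α) {f : l → m} (hf : Function.Injective f)
    (hsupp : ∀ p ∉ Set.range f, ∀ a, A p (f a) = 0) :
    A.submatrix f f ∈ unitaryGroup l α := by
  rw [mem_unitaryGroup_iff'] at hA ⊢
  ext a b
  rw [← submatrix_one f hf, ← hA]
  simp only [mul_apply, submatrix_apply, star_apply]
  exact Fintype.sum_of_injective f hf _ _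
    (fun p hp => by rw [hsupp p hp a, star_zero, zero_mul]) fun _ => rfl

lemma mem_unitary_and_col_eq_zero_of_row_eq_zero [Field α] [StarRing α] {A : Matrix m m α}
    (hA : A ∈ unitaryGroup m α) {i : m} (hrow : ∀ q ≠ i, A i q = 0) :
    A i i ∈ unitary α ∧ ∀ p ≠ i, A p i = 0 := by
  have hcol : ∀ p, A p i * star (A i i) = (1 : Matrix m m α) p i := fun p => by
    rw [← mem_unitaryGroup_iff.mp hA, mul_apply,
      Fintype.sum_eq_single i fun q hq => by rw [star_apply, hrow q hq, star_zero, mul_zero],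
      star_apply]
  have hii : A i i * star (A i i) = 1 := by simpa using hcol i
  refine ⟨Unitary.mem_iff_self_mul_star.2 hii, fun p hp => ?_⟩
  have h := hcol p
  rw [one_apply_ne hp] at h
  exact (mul_eq_zero.1 h).resolve_right (right_ne_zero_of_mul_eq_one hii)

lemma mul_single_mul_transpose_apply [CommSemiring α] (A : Matrix m m α) (i k p q : m) (c : α) :
    (A * single i k c * Aᵀ : Matrix m m α) p q = A p i * c * A q k := by
  rw [mul_apply, Fintype.sum_eq_single k fun b hb => by
    rw [mul_single_apply_of_ne (hbj := hb), zero_mul]]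
  rw [mul_single_apply_same, transpose_apply]

end GeneralMatrices

section PairBlocks

variable {n j : ℕ}

def pairIndex (h : 2 * j + 1 < n) (a : Fin 2) : Fin n := ⟨2 * j + a, by omega⟩

def pairBlock {α : Type*} (A : Matrix (Fin n) (Fin n) α) (h : 2 * j + 1 < n) :
    Matrix (Fin 2) (Fin 2) α :=
  A.submatrix (pairIndex h) (pairIndex h)

lemma pairIndex_injective (h : 2 * j + 1 < n) : Function.Injective (pairIndex h) :=
  fun a b hab => Fin.ext (by simpa [pairIndex] using hab)

lemma pairIndex_val_div_two (h : 2 * j + 1 < n) (a : Fin 2) : (pairIndex h a : ℕ) / 2 = j := by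
  simp only [pairIndex]; omega

lemma exists_pairIndex_eq (h : 2 * j + 1 < n) {p : Fin n} (hp : (p : ℕ) / 2 = j) :
    ∃ a, pairIndex h a = p :=
  ⟨⟨p % 2, Nat.mod_lt _ two_pos⟩, Fin.ext (by simp only [pairIndex]; omega)⟩

lemma aBasisMat_eq_single (h : 2 * j + 1 < n) :
    aBasisMat n j h =
      single (pairIndex h 0) (pairIndex h 1) 1 - single (pairIndex h 1) (pairIndex h 0) 1 :=
  rfl

lemma conj_aBasisMat_apply (A : Matrix (Fin n) (Fin n) ℂ) (h : 2 * j + 1 < n) (p q : Fin n) :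
    (A * aBasisMat n j h * Aᵀ) p q =
      A p (pairIndex h 0) * A q (pairIndex h 1) - A p (pairIndex h 1) * A q (pairIndex h 0) := by
  simp only [aBasisMat_eq_single, Matrix.mul_sub, Matrix.sub_mul, Matrix.sub_apply,
    mul_single_mul_transpose_apply, mul_one]

lemma conj_aBasisMat_eq_iff (A : Matrix (Fin n) (Fin n) ℂ) (h : 2 * j + 1 < n) :
    A * aBasisMat n j h * Aᵀ = aBasisMat n j h ↔
      (pairBlock A h).det = 1 ∧
        ∀ p q : Fin n, (q : ℕ) / 2 = j → (p : ℕ) / 2 ≠ j → A p q = 0 := by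
  -- Writing `X_j = 1 * X_j * 1ᵀ` gives both sides of the equation entries of the same shape.
  have hX : aBasisMat n j h = 1 * aBasisMat n j h * (1 : Matrix (Fin n) (Fin n) ℂ)ᵀ := by simp
  have hne : pairIndex h 0 ≠ pairIndex h 1 := (pairIndex_injective h).ne (by decide)
  have hdet : (pairBlock A h).det =
      A (pairIndex h 0) (pairIndex h 0) * A (pairIndex h 1) (pairIndex h 1)
      - A (pairIndex h 0) (pairIndex h 1) * A (pairIndex h 1) (pairIndex h 0) := det_fin_two _
  have hout : ∀ p : Fin n, (p : ℕ) / 2 ≠ j → ∀ a, p ≠ pairIndex h a :=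
    fun p hp a e => hp (e ▸ pairIndex_val_div_two h a)
  constructor
  · intro hc
    have entry (p q : Fin n) := by
      simpa only [conj_aBasisMat_apply] using congrFun₂ (hc.trans hX) p q
    have hdet1 : (pairBlock A h).det = 1 := by
      simpa [hdet, hne, hne.symm] using entry (pairIndex h 0) (pairIndex h 1)
    refine ⟨hdet1, fun p q hq hp => ?_⟩
    have e₀ := entry p (pairIndex h 0)
    have e₁ := entry p (pairIndex h 1)
    simp only [one_apply_ne (hout p hp _), zero_mul, sub_zero] at e₀ e₁
    rw [hdet] at hdet1
    suffices A p (pairIndex h 0) = 0 ∧ A p (pairIndex h 1) = 0 by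
      obtain ⟨a, rfl⟩ := exists_pairIndex_eq h hq
      fin_cases a
      exacts [this.1, this.2]
    constructor
    · linear_combination (-A p (pairIndex h 0)) * hdet1
        + A (pairIndex h 0) (pairIndex h 0) * e₁ - A (pairIndex h 1) (pairIndex h 0) * e₀
    · linear_combination (-A p (pairIndex h 1)) * hdet1
        + A (pairIndex h 0) (pairIndex h 1) * e₁ - A (pairIndex h 1) (pairIndex h 1) * e₀
  · rintro ⟨hdet1, hsupp⟩
    have hcol : ∀ p : Fin n, (p : ℕ) / 2 ≠ j → ∀ a, A p (pairIndex h a) = 0 :=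
      fun p hp a => hsupp p _ (pairIndex_val_div_two h a) hp
    ext p q
    rw [conj_aBasisMat_apply, hX, conj_aBasisMat_apply]
    by_cases hp : (p : ℕ) / 2 = j
    swap
    · simp [hcol p hp, one_apply_ne (hout p hp _)]
    by_cases hq : (q : ℕ) / 2 = j
    swap
    · simp [hcol q hq, one_apply_ne (hout q hq _)]
    obtain ⟨a, rfl⟩ := exists_pairIndex_eq h hp
    obtain ⟨b, rfl⟩ := exists_pairIndex_eq h hq
    clear hp hq
    rw [hdet] at hdet1
    revert a b
    simp only [Fin.forall_fin_two, one_apply_eq, one_apply_ne hne, one_apply_ne hne.symm]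
    exact ⟨⟨by ring, by linear_combination hdet1⟩, by linear_combination -hdet1, by ring⟩

end PairBlocks

lemma two_mul_val_add_one_lt {n r : ℕ} (hr : 2 * r ≤ n) (k : Fin r) :
    2 * (k : ℕ) + 1 < n := by
  have := k.isLt
  omega

lemma forall_conj_aBasisMat_eq_iff {n r : ℕ} (hr : 2 * r ≤ n) (A : Matrix (Fin n) (Fin n) ℂ) :
    (∀ k : Fin r, A * aBasisMat n k (two_mul_val_add_one_lt hr k) * Aᵀ
        = aBasisMat n k (two_mul_val_add_one_lt hr k)) ↔
      (∀ k : Fin r, (pairBlock A (j := k) (two_mul_val_add_one_lt hr k)).det = 1) ∧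
        ∀ p q : Fin n, (q : ℕ) / 2 < r → (p : ℕ) / 2 ≠ (q : ℕ) / 2 → A p q = 0 := by
  simp only [conj_aBasisMat_eq_iff, forall_and]
  refine and_congr_right' ⟨fun h p q hq hpq => h ⟨_, hq⟩ p q rfl hpq, ?_⟩
  intro h k p q hq hp
  exact h p q (hq ▸ k.isLt) (hq ▸ hp)

section Even

variable {r : ℕ}

lemma pairEquiv_apply (a : Fin 2) (k : Fin r) :
    pairEquiv r (a, k) = pairIndex (j := k) (two_mul_val_add_one_lt le_rfl k) a :=
  Fin.ext (by simp [pairEquiv, pairIndex]; ring)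

lemma suBlockMatrixHom_apply (B : Fin r → SUgrp 2) (a a' : Fin 2) (k k' : Fin r) :
    suBlockMatrixHom r B (pairEquiv r (a, k)) (pairEquiv r (a', k')) =
      if k = k' then suCoeHom 2 (B k) a a' else 0 := by
  simp [suBlockMatrixHom, blockDiagonal_apply]

lemma suBlockMatrixHom_apply_eq_zero (B : Fin r → SUgrp 2) {p q : Fin (2 * r)}
    (h : (p : ℕ) / 2 ≠ (q : ℕ) / 2) : suBlockMatrixHom r B p q = 0 := by
  obtain ⟨⟨a, k⟩, rfl⟩ := (pairEquiv r).surjective p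
  obtain ⟨⟨a', k'⟩, rfl⟩ := (pairEquiv r).surjective q
  rw [suBlockMatrixHom_apply, if_neg]
  rintro rfl
  simp [pairEquiv_apply, pairIndex_val_div_two] at h

lemma pairBlock_suBlockMatrixHom (B : Fin r → SUgrp 2) (k : Fin r) :
    pairBlock (suBlockMatrixHom r B) (j := k) (two_mul_val_add_one_lt le_rfl k) =
      suCoeHom 2 (B k) := by
  ext a a'
  rw [pairBlock, submatrix_apply, ← pairEquiv_apply, ← pairEquiv_apply,
    suBlockMatrixHom_apply, if_pos rfl]

lemma conj_aBasisMat_suBlockMatrixHom (B : Fin r → SUgrp 2) (k : Fin r) :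
    suBlockMatrixHom r B * aBasisMat (2 * r) k (two_mul_val_add_one_lt le_rfl k) *
        (suBlockMatrixHom r B)ᵀ = aBasisMat (2 * r) k (two_mul_val_add_one_lt le_rfl k) :=
  (conj_aBasisMat_eq_iff _ _).2 ⟨by rw [pairBlock_suBlockMatrixHom]; exact (B k).2,
    fun _ _ hq hp => suBlockMatrixHom_apply_eq_zero B (hq ▸ hp)⟩

lemma exists_eq_suBlockMatrixHom {A : Matrix (Fin (2 * r)) (Fin (2 * r)) ℂ}
    (hA : A ∈ unitaryGroup (Fin (2 * r)) ℂ)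
    (hdet : ∀ k : Fin r, (pairBlock A (j := k) (two_mul_val_add_one_lt le_rfl k)).det = 1)
    (hsupp : ∀ p q : Fin (2 * r), (p : ℕ) / 2 ≠ (q : ℕ) / 2 → A p q = 0) :
    ∃ B : Fin r → SUgrp 2, A = suBlockMatrixHom r B := by
  have hblock (k : Fin r) :
      pairBlock A (j := k) (two_mul_val_add_one_lt le_rfl k) ∈ unitaryGroup _ ℂ :=
    submatrix_mem_unitaryGroup hA (pairIndex_injective _) fun p hp a =>
      hsupp _ _ (by rw [pairIndex_val_div_two]; exact fun e => hp (exists_pairIndex_eq _ e))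
  refine ⟨fun k => ⟨⟨_, hblock k⟩, hdet k⟩, ?_⟩
  ext p q
  obtain ⟨⟨a, k⟩, rfl⟩ := (pairEquiv r).surjective p
  obtain ⟨⟨a', k'⟩, rfl⟩ := (pairEquiv r).surjective q
  rw [suBlockMatrixHom_apply]
  split_ifs with hk
  · subst hk
    rw [pairEquiv_apply, pairEquiv_apply]
    rfl
  · exact hsupp _ _ (by simpa [pairEquiv_apply, pairIndex_val_div_two] using Fin.val_ne_of_ne hk)

end Even

section Odd

variable {r : ℕ} (B : Fin r → SUgrp 2) (z : unitary ℂ)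

lemma suOddMatrixHom_castSucc_castSucc (i i' : Fin (2 * r)) :
    suOddMatrixHom r (B, z) i.castSucc i'.castSucc = suBlockMatrixHom r B i i' := by
  simp [suOddMatrixHom]

lemma suOddMatrixHom_castSucc_last (i : Fin (2 * r)) :
    suOddMatrixHom r (B, z) i.castSucc (Fin.last _) = 0 := by
  simp [suOddMatrixHom]

lemma suOddMatrixHom_last_castSucc (i : Fin (2 * r)) :
    suOddMatrixHom r (B, z) (Fin.last _) i.castSucc = 0 := by
  simp [suOddMatrixHom]

lemma suOddMatrixHom_last_last : suOddMatrixHom r (B, z) (Fin.last _) (Fin.last _) = z := by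
  simp [suOddMatrixHom]

lemma suOddMatrixHom_apply_eq_zero {p q : Fin (2 * r + 1)} (hq : (q : ℕ) / 2 < r)
    (h : (p : ℕ) / 2 ≠ (q : ℕ) / 2) : suOddMatrixHom r (B, z) p q = 0 := by
  induction q using Fin.lastCases with
  | last => simp at hq
  | cast q =>
    induction p using Fin.lastCases with
    | last => exact suOddMatrixHom_last_castSucc B z q
    | cast p =>
      rw [suOddMatrixHom_castSucc_castSucc]
      exact suBlockMatrixHom_apply_eq_zero B (by simpa using h)

lemma pairBlock_suOddMatrixHom (k : Fin r) :
    pairBlock (suOddMatrixHom r (B, z)) (j := k) (two_mul_val_add_one_lt (Nat.le_succ _) k) =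
      suCoeHom 2 (B k) := by
  rw [← pairBlock_suBlockMatrixHom B k]
  ext a a'
  exact suOddMatrixHom_castSucc_castSucc B z (pairIndex _ a) (pairIndex _ a')

lemma conj_aBasisMat_suOddMatrixHom (k : Fin r) :
    suOddMatrixHom r (B, z) * aBasisMat (2 * r + 1) k (two_mul_val_add_one_lt (Nat.le_succ _) k) *
        (suOddMatrixHom r (B, z))ᵀ =
      aBasisMat (2 * r + 1) k (two_mul_val_add_one_lt (Nat.le_succ _) k) :=
  (conj_aBasisMat_eq_iff _ _).2 ⟨by rw [pairBlock_suOddMatrixHom]; exact (B k).2,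
    fun _ _ hq hp => suOddMatrixHom_apply_eq_zero B z (hq ▸ k.isLt) (hq ▸ hp)⟩

lemma exists_eq_suOddMatrixHom {A : Matrix (Fin (2 * r + 1)) (Fin (2 * r + 1)) ℂ}
    (hA : A ∈ unitaryGroup (Fin (2 * r + 1)) ℂ)
    (hdet : ∀ k : Fin r,
      (pairBlock A (j := k) (two_mul_val_add_one_lt (Nat.le_succ _) k)).det = 1)
    (hsupp : ∀ p q : Fin (2 * r + 1),
      (q : ℕ) / 2 < r → (p : ℕ) / 2 ≠ (q : ℕ) / 2 → A p q = 0) :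
    ∃ (B : Fin r → SUgrp 2) (z : unitary ℂ), A = suOddMatrixHom r (B, z) := by
  have hrow : ∀ q ≠ Fin.last (2 * r), A (Fin.last _) q = 0 := fun q hq => by
    obtain ⟨q, rfl⟩ := Fin.exists_castSucc_eq.2 hq
    exact hsupp _ _ (by simp; omega) (by simp; omega)
  obtain ⟨hz, hcol⟩ := mem_unitary_and_col_eq_zero_of_row_eq_zero hA hrow
  obtain ⟨B, hB⟩ := exists_eq_suBlockMatrixHom (A := A.submatrix Fin.castSucc Fin.castSucc)
    (submatrix_mem_unitaryGroup hA (Fin.castSucc_injective _) fun p hp a => by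
      obtain rfl : p = Fin.last _ := Fin.ext (by simp at hp; simp; omega)
      exact hrow _ (Fin.castSucc_ne_last a))
    hdet fun p q h => hsupp _ _ (by simp; omega) (by simpa using h)
  refine ⟨B, ⟨_, hz⟩, ?_⟩
  ext p q
  induction p using Fin.lastCases <;> induction q using Fin.lastCases
  · rw [suOddMatrixHom_last_last]
  · rw [suOddMatrixHom_last_castSucc, hrow _ (Fin.castSucc_ne_last _)]
  · rw [suOddMatrixHom_castSucc_last, hcol _ (Fin.castSucc_ne_last _)]
  · rw [suOddMatrixHom_castSucc_castSucc, ← hB]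
    rfl

end Odd

/-- the centralizer in `U(n)` of
`𝔞 = Σ_j ℝ(E_{2j-1,2j} - E_{2j,2j-1})` for the action `A · X = A X Aᵀ` equals the
block-diagonal subgroup `SU(2)^r = {diag(A₁, …, A_r)}` when `n = 2r`, and equals
`SU(2)^r × U(1) = {diag(A₁, …, A_r, z)}` when `n = 2r + 1`. -/
theorem statement_16 (r : ℕ) :
    ({A : Matrix.unitaryGroup (Fin (2 * r)) ℂ |
        ∀ j : Fin r,
          (A : Matrix (Fin (2 * r)) (Fin (2 * r)) ℂ) *
              aBasisMat (2 * r) j (by have := j.isLt; omega) *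
            Matrix.transpose (A : Matrix (Fin (2 * r)) (Fin (2 * r)) ℂ)
          = aBasisMat (2 * r) j (by have := j.isLt; omega)}
      = {A : Matrix.unitaryGroup (Fin (2 * r)) ℂ | ∃ B : Fin r → SUgrp 2,
          (A : Matrix (Fin (2 * r)) (Fin (2 * r)) ℂ) = suBlockMatrixHom r B}) ∧
    ({A : Matrix.unitaryGroup (Fin (2 * r + 1)) ℂ |
        ∀ j : Fin r,
          (A : Matrix (Fin (2 * r + 1)) (Fin (2 * r + 1)) ℂ) *
              aBasisMat (2 * r + 1) j (by have := j.isLt; omega) *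
            Matrix.transpose (A : Matrix (Fin (2 * r + 1)) (Fin (2 * r + 1)) ℂ)
          = aBasisMat (2 * r + 1) j (by have := j.isLt; omega)}
      = {A : Matrix.unitaryGroup (Fin (2 * r + 1)) ℂ |
          ∃ (B : Fin r → SUgrp 2) (z : unitary ℂ),
            (A : Matrix (Fin (2 * r + 1)) (Fin (2 * r + 1)) ℂ) = suOddMatrixHom r (B, z)}) := by
  refine ⟨Set.ext fun A => ⟨fun hc => ?_, ?_⟩, Set.ext fun A => ⟨fun hc => ?_, ?_⟩⟩
  · obtain ⟨hdet, hsupp⟩ := (forall_conj_aBasisMat_eq_iff le_rfl _).1 hc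
    exact exists_eq_suBlockMatrixHom A.2 hdet fun p q => hsupp p q (by omega)
  · rintro ⟨B, hB⟩ k
    rw [hB]
    exact conj_aBasisMat_suBlockMatrixHom B k
  · obtain ⟨hdet, hsupp⟩ := (forall_conj_aBasisMat_eq_iff (Nat.le_succ _) _).1 hc
    exact exists_eq_suOddMatrixHom A.2 hdet hsupp
  · rintro ⟨B, z, hB⟩ k
    rw [hB]
    exact conj_aBasisMat_suOddMatrixHom B z k

end Stmt16Part
end
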